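/- arXiv:1311.3522 — 3 statements merged into one kernel-verified Lean document; each statement's English description precedes it below -/
import Mathlib

section
/- Let n be a square-free composite positive integer and k a positive integer. Then λ(n) divides k(n-1) if and only if for every integer a, a^{kn} ≡ a^k (mod n). -/
open Finset

/-- The Carmichael function: exponent of the unit group of `ZMod n`. -/
noncomputable def carmichael (n : ℕ) : ℕ := Monoid.exponent (ZMod n)ˣ

/-- `n` is composite. -/
def Composite (n : ℕ) : Prop := 2 ≤ n ∧ ¬ n.Prime

/-- `n` is a Giuga number. -/
def IsGiuga (n : ℕ) : Prop :=
  Composite n ∧ ∀ p : ℕ, p.Prime → p ∣ n → p ∣ (n / p - 1)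

theorem sub_one_dvd_carmichael {p n : ℕ} (hp : p.Prime) (hpn : p ∣ n) (hn : 2 ≤ n) :
    p - 1 ∣ carmichael n := by
  haveI : Fact p.Prime := ⟨hp⟩
  haveI : NeZero n := ⟨by omega⟩
  have h1 : Monoid.exponent (ZMod p)ˣ ∣ carmichael n :=
    MonoidHom.exponent_dvd (f := ZMod.unitsMap hpn) (ZMod.unitsMap_surjective hpn)
  have h2 : Monoid.exponent (ZMod p)ˣ = p - 1 := by
    rw [IsCyclic.exponent_eq_card, Nat.card_eq_fintype_card, ZMod.card_units_eq_totient,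
      Nat.totient_prime hp]
  rwa [h2] at h1

theorem kCarmichael_iff_pow_congr (n k : ℕ) (hsf : Squarefree n)
    (hn : Composite n) (hk : 0 < k) :
    carmichael n ∣ k * (n - 1) ↔
      ∀ a : ℤ, a ^ (k * n) ≡ a ^ k [ZMOD (n : ℤ)] := by
  obtain ⟨hn2, -⟩ := hn
  haveI : NeZero n := ⟨by omega⟩
  constructor
  · intro hdvd a
    -- reduce to each prime factor
    have key : ∀ p ∈ n.primeFactors, (p : ℤ) ∣ a ^ (k * n) - a ^ k := by
      intro p hp
      rw [Nat.mem_primeFactors] at hp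
      obtain ⟨hp, hpn, -⟩ := hp
      haveI : Fact p.Prime := ⟨hp⟩
      rw [← ZMod.intCast_zmod_eq_zero_iff_dvd]
      push_cast
      rw [sub_eq_zero]
      set b : ZMod p := (a : ZMod p)
      rcases eq_or_ne b 0 with hb | hb
      · rw [hb, zero_pow, zero_pow] <;> positivity
      · have hcd : p - 1 ∣ k * (n - 1) :=
          (sub_one_dvd_carmichael hp hpn hn2).trans hdvd
        obtain ⟨t, ht⟩ := hcd
        have h1 : b ^ (p - 1) = 1 := ZMod.pow_card_sub_one_eq_one hb
        have hkn : k * n = k * (n - 1) + k := by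
          rw [← Nat.mul_succ]; congr 1; omega
        rw [hkn, pow_add, ht, pow_mul, h1, one_pow, one_mul]
    have hprod : (n : ℤ) ∣ a ^ (k * n) - a ^ k := by
      have hn' : (n : ℤ) = ∏ p ∈ n.primeFactors, (p : ℤ) := by
        rw [← Nat.cast_prod, Nat.prod_primeFactors_of_squarefree hsf]
      rw [hn']
      refine Finset.prod_dvd_of_coprime ?_ key
      intro p hp q hq hpq
      simp only [Function.onFun]
      rw [Nat.isCoprime_iff_coprime]
      rw [Finset.mem_coe, Nat.mem_primeFactors] at hp hq
      exact (Nat.coprime_primes hp.1 hq.1).mpr hpq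
    exact Int.modEq_iff_dvd.mpr (by
      rw [show a ^ k - a ^ (k * n) = -(a ^ (k * n) - a ^ k) by ring]
      exact dvd_neg.mpr hprod)
  · intro h
    rw [carmichael]
    apply Monoid.exponent_dvd_of_forall_pow_eq_one
    intro u
    have hu := h ((u : ZMod n).val : ℤ)
    have : ((u : ZMod n) : ZMod n) ^ (k * n) = ((u : ZMod n)) ^ k := by
      have := (ZMod.intCast_eq_intCast_iff _ _ _).mpr hu
      push_cast at this
      simpa [ZMod.natCast_val, ZMod.cast_id] using this
    have hu2 : u ^ (k * n) = u ^ k := Units.ext (by push_cast; simpa using this)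
    have hkn : k * n = k * (n - 1) + k := by
      rw [← Nat.mul_succ]; congr 1; omega
    rw [hkn, pow_add] at hu2
    have : u ^ (k * (n - 1)) * u ^ k = 1 * u ^ k := by rw [one_mul]; exact hu2
    exact mul_right_cancel this
end

section
/- A composite integer n is a k-strong Giuga number (i.e., ∑_{j=1}^{n-1} j^{k(n-1)} ≡ -1 (mod n)) if and only if n is both a Giuga number and λ(n) divides k(n-1). -/
/-!
Put `e = k (n - 1)`. For a prime `p ∣ n`, reducing modulo `p` splits `∑_{j<n} j^e` into `n / p`
full periods, each equal to `∑_{x ∈ 𝔽_p} x^e`, which is `-1` if `p - 1 ∣ e` and `0` otherwise.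
So the sum is `≡ -1 (mod p)` iff `p - 1 ∣ e` and `n / p ≡ 1 (mod p)`. The second condition,
for all `p ∣ n`, is Giuga's condition and forces `n` to be squarefree, so that the congruences
modulo the primes `p ∣ n` lift to one modulo `n`, and `λ(n) = lcm (p - 1)` divides `e` iff every
`p - 1` does.
-/

open Finset

theorem FiniteField.sum_pow_of_ne_zero {K : Type*} [Field K] [Fintype K] {e : ℕ} (he : e ≠ 0) :
    ∑ x : K, x ^ e = if Fintype.card K - 1 ∣ e then -1 else 0 := by
  classical
  rw [Fintype.sum_eq_add_sum_subtype_ne _ 0, zero_pow he, zero_add, ← sum_pow_units]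
  exact Fintype.sum_equiv unitsEquivNeZero.symm _ _ fun _ => rfl

theorem ZMod.sum_range_eq_sum_univ {M : Type*} [AddCommMonoid M] (p : ℕ) [NeZero p]
    (f : ZMod p → M) : ∑ j ∈ range p, f j = ∑ x, f x := by
  rw [Finset.sum_range]
  refine Fintype.sum_bijective (fun i : Fin p => ((i : ℕ) : ZMod p))
    ⟨fun i j hij => ?_, fun x => ?_⟩ _ _ fun _ => rfl
  · simpa [ZMod.val_cast_of_lt i.2, ZMod.val_cast_of_lt j.2, Fin.ext_iff]
      using congrArg ZMod.val hij
  · exact ⟨⟨x.val, x.val_lt⟩, ZMod.natCast_zmod_val x⟩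

theorem ZMod.sum_range_eq_nsmul_of_dvd {M : Type*} [AddCommMonoid M] {p n : ℕ} (hpn : p ∣ n)
    (f : ZMod p → M) : ∑ j ∈ range n, f j = (n / p) • ∑ j ∈ range p, f j := by
  obtain ⟨m, rfl⟩ := hpn
  rcases p.eq_zero_or_pos with rfl | hp
  · simp
  rw [Nat.mul_div_cancel_left m hp, mul_comm]
  induction m with
  | zero => simp
  | succ m ih =>
    rw [Nat.succ_mul, sum_range_add, ih, succ_nsmul]
    congr 1
    refine sum_congr rfl fun j _ => ?_
    simp

theorem sum_Ico_one_pow_eq_sum_range {R : Type*} [Semiring R] {e : ℕ} (he : e ≠ 0) (n : ℕ) :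
    ∑ j ∈ Ico 1 n, (j : R) ^ e = ∑ j ∈ range n, (j : R) ^ e := by
  refine sum_subset (fun j hj => by simp at hj ⊢; omega) fun j hj hj' => ?_
  obtain rfl : j = 0 := by simp at hj hj'; omega
  simp [he]

theorem ZMod.castHom_sum_Ico_pow {n p e : ℕ} [Fact p.Prime] (hpn : p ∣ n) (he : e ≠ 0) :
    ZMod.castHom hpn (ZMod p) (∑ j ∈ Ico 1 n, (j : ZMod n) ^ e) =
      ((n / p : ℕ) : ZMod p) * if p - 1 ∣ e then -1 else 0 := by
  simp only [map_sum, map_pow, map_natCast]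
  rw [sum_Ico_one_pow_eq_sum_range he, ZMod.sum_range_eq_nsmul_of_dvd hpn (· ^ e),
    ZMod.sum_range_eq_sum_univ p (· ^ e), FiniteField.sum_pow_of_ne_zero he, ZMod.card,
    nsmul_eq_mul]

theorem ZMod.eq_zero_of_squarefree {n : ℕ} (hn : Squarefree n) (x : ZMod n)
    (h : ∀ p, p.Prime → ∀ hpn : p ∣ n, ZMod.castHom hpn (ZMod p) x = 0) : x = 0 := by
  have : NeZero n := ⟨hn.ne_zero⟩
  rw [← ZMod.natCast_zmod_val x, ZMod.natCast_eq_zero_iff]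
  calc n = ∏ p ∈ n.primeFactors, p := (Nat.prod_primeFactors_of_squarefree hn).symm
    _ ∣ x.val := Finset.prod_primes_dvd _ (fun p hp => (Nat.prime_of_mem_primeFactors hp).prime)
      fun p hp => ?_
  have hx := h p (Nat.prime_of_mem_primeFactors hp) (Nat.dvd_of_mem_primeFactors hp)
  rwa [← ZMod.natCast_zmod_val x, map_natCast, ZMod.natCast_eq_zero_iff] at hx

theorem ZMod.natCast_eq_one_iff_dvd_sub_one {m p : ℕ} (hm : m ≠ 0) :
    (m : ZMod p) = 1 ↔ p ∣ m - 1 := by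
  rw [← Nat.cast_one, eq_comm, ZMod.natCast_eq_natCast_iff, Nat.modEq_iff_dvd' (by omega)]

theorem squarefree_of_forall_natCast_div_eq_one {n : ℕ}
    (h : ∀ p, p.Prime → p ∣ n → ((n / p : ℕ) : ZMod p) = 1) : Squarefree n := by
  rw [Nat.squarefree_iff_prime_squarefree]
  intro p hp hpp
  have := Fact.mk hp
  have h1 := h p hp (dvd_of_mul_left_dvd hpp)
  rw [(ZMod.natCast_eq_zero_iff _ _).2 (Nat.dvd_div_of_mul_dvd hpp)] at h1
  exact zero_ne_one h1

theorem carmichael_prime {p : ℕ} (hp : p.Prime) : carmichael p = p - 1 := by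
  have := Fact.mk hp
  rw [carmichael, IsCyclic.exponent_eq_card, Nat.card_eq_fintype_card, ZMod.card_units]

theorem carmichael_dvd_iff_of_squarefree {n e : ℕ} (hn : Squarefree n) :
    carmichael n ∣ e ↔ ∀ p, p.Prime → p ∣ n → p - 1 ∣ e := by
  have : NeZero n := ⟨hn.ne_zero⟩
  rw [carmichael, ← ArithmeticFunction.carmichael_eq_exponent' n,
    ArithmeticFunction.carmichael_factorization, Finset.lcm_dvd_iff]
  refine forall_congr' fun p => ?_
  rw [Nat.mem_primeFactors_of_ne_zero hn.ne_zero, and_imp]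
  refine forall_congr' fun hp => forall_congr' fun hpn => ?_
  rw [Nat.factorization_eq_one_of_squarefree hn hp hpn, pow_one,
    ArithmeticFunction.carmichael_eq_exponent hp.ne_zero, ← carmichael, carmichael_prime hp]

theorem isGiuga_iff_natCast_div_eq_one {n : ℕ} :
    IsGiuga n ↔ Composite n ∧ ∀ p, p.Prime → p ∣ n → ((n / p : ℕ) : ZMod p) = 1 := by
  refine and_congr_right fun hn => forall₃_congr fun p hp hpn => ?_
  have hn0 : n ≠ 0 := by have := hn.1; omega
  exact (ZMod.natCast_eq_one_iff_dvd_sub_one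
    ((Nat.div_ne_zero_iff_of_dvd hpn).2 ⟨hn0, hp.ne_zero⟩)).symm

theorem sum_Ico_pow_eq_neg_one_iff {n e : ℕ} (he : e ≠ 0) :
    ∑ j ∈ Ico 1 n, (j : ZMod n) ^ e = -1 ↔
      ∀ p, p.Prime → p ∣ n → p - 1 ∣ e ∧ ((n / p : ℕ) : ZMod p) = 1 := by
  have hlocal : ∀ p (hp : p.Prime) (hpn : p ∣ n),
      ZMod.castHom hpn (ZMod p) (∑ j ∈ Ico 1 n, (j : ZMod n) ^ e + 1) = 0 ↔
        p - 1 ∣ e ∧ ((n / p : ℕ) : ZMod p) = 1 := by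
    intro p hp hpn
    have := Fact.mk hp
    rw [map_add, map_one, ZMod.castHom_sum_Ico_pow hpn he]
    split_ifs with hdvd <;> simp [hdvd, add_eq_zero_iff_eq_neg]
  rw [← add_eq_zero_iff_eq_neg]
  refine ⟨fun h p hp hpn => (hlocal p hp hpn).1 (by rw [h, map_zero]), fun h => ?_⟩
  exact ZMod.eq_zero_of_squarefree
    (squarefree_of_forall_natCast_div_eq_one fun p hp hpn => (h p hp hpn).2) _
    fun p hp hpn => (hlocal p hp hpn).2 (h p hp hpn)

theorem kStrongGiuga_iff (n k : ℕ) (hn : Composite n) (hk : 0 < k) :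
    (∑ j ∈ Finset.Ico 1 n, (j : ZMod n) ^ (k * (n - 1)) = -1) ↔
      IsGiuga n ∧ carmichael n ∣ k * (n - 1) := by
  have he : k * (n - 1) ≠ 0 := Nat.mul_ne_zero hk.ne' (by have := hn.1; omega)
  rw [sum_Ico_pow_eq_neg_one_iff he, isGiuga_iff_natCast_div_eq_one]
  constructor
  · intro h
    have hsq := squarefree_of_forall_natCast_div_eq_one fun p hp hpn => (h p hp hpn).2
    exact ⟨⟨hn, fun p hp hpn => (h p hp hpn).2⟩,
      (carmichael_dvd_iff_of_squarefree hsq).2 fun p hp hpn => (h p hp hpn).1⟩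
  · rintro ⟨⟨-, hgiuga⟩, hcar⟩ p hp hpn
    have hsq := squarefree_of_forall_natCast_div_eq_one hgiuga
    exact ⟨(carmichael_dvd_iff_of_squarefree hsq).1 hcar p hp hpn, hgiuga p hp hpn⟩
end

section
/- Let n be a composite integer and suppose ∑_{j=1}^{n-1} j^{e} ≡ -1 (mod n) for some positive integer e. Then n is square-free. -/
open Finset

/-! If `p² ∣ n`, then `0, 1, …, n - 1` run `n / p` times through every residue class
mod `p`, and `p ∣ n / p`; so modulo `p` the power sum `∑_{j < n} jᵉ` vanishes, while the
hypothesis says it is `-1` (the term `j = 0` does not count because `e > 0`). -/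

theorem Function.Periodic.sum_range_mul {M : Type*} [AddCommMonoid M] {f : ℕ → M} {p : ℕ}
    (hf : Function.Periodic f p) (m : ℕ) :
    ∑ j ∈ range (m * p), f j = m • ∑ j ∈ range p, f j := by
  induction m with
  | zero => simp
  | succ m ih =>
    rw [Nat.succ_mul, sum_range_add, ih, succ_nsmul]
    congr 1
    exact sum_congr rfl fun j _ => by rw [add_comm]; exact hf.nsmul m j

theorem Finset.sum_Ico_one_eq_sum_range {M : Type*} [AddCommMonoid M] {f : ℕ → M} (hf : f 0 = 0)
    (n : ℕ) : ∑ j ∈ Ico 1 n, f j = ∑ j ∈ range n, f j := by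
  rw [range_eq_Ico]
  refine sum_subset (Ico_subset_Ico_left zero_le_one) fun j hj hj' => ?_
  obtain rfl : j = 0 := by simp only [mem_Ico] at hj hj'; omega
  exact hf

theorem ZMod.sum_range_natCast_pow_eq_zero {p n : ℕ} (hn : p * p ∣ n) (e : ℕ) :
    ∑ j ∈ range n, (j : ZMod p) ^ e = 0 := by
  obtain ⟨k, rfl⟩ := hn
  have hper : Function.Periodic (fun j : ℕ => (j : ZMod p) ^ e) p := fun j => by simp
  rw [show p * p * k = p * k * p by ring, hper.sum_range_mul, nsmul_eq_mul]
  simp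

theorem squarefree_of_powerSum_general (n e : ℕ) (he : 0 < e)
    (h : ∑ j ∈ Finset.Ico 1 n, (j : ZMod n) ^ e = -1) : Squarefree n := by
  rw [Nat.squarefree_iff_prime_squarefree]
  intro p hp hpp
  have : Fact p.Prime := ⟨hp⟩
  have hmod_p : ∑ j ∈ Ico 1 n, (j : ZMod p) ^ e = -1 := by
    simpa only [map_sum, map_pow, map_natCast, map_neg, map_one] using
      congrArg (ZMod.castHom (dvd_of_mul_right_dvd hpp) (ZMod p)) h
  rw [sum_Ico_one_eq_sum_range (by simp [he.ne']), ZMod.sum_range_natCast_pow_eq_zero hpp] at hmod_p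
  exact neg_ne_zero.mpr one_ne_zero hmod_p.symm

theorem squarefree_of_powerSum (n e : ℕ) (hn : Composite n) (he : 0 < e)
    (h : ∑ j ∈ Finset.Ico 1 n, (j : ZMod n) ^ e = -1) : Squarefree n :=
  squarefree_of_powerSum_general n e he h
end
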